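/- arXiv:2410.23913 — 2 statements merged into one kernel-verified Lean document; each statement's English description precedes it below -/
import Mathlib

section
/- Say φ ∈ ℒ is decreasing if for all π, π' ∈ 𝒢 with π' extending π, π' ⊨ φ implies π ⊨ φ. If φ is decreasing, then φ is strongly compositional if and only if φ is compositional. -/
namespace LexPref

/-- A pair consisting of a variable and a total order (as a binary relation) on its domain. -/
structure LexPair (ι : Type*) (D : ι → Type*) where
  var : ι
  ord : D var → D var → Prop
  isLin : IsLinearOrder (D var) ord

/-- An outcome assigns a value to every variable. -/
abbrev Outcome (ι : Type*) (D : ι → Type*) := ∀ i, D i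

/-- A lexicographic model: a list of pairs (variable, total order) with pairwise
distinct variables. -/
abbrev LexModel (ι : Type*) (D : ι → Type*) :=
  { l : List (LexPair ι D) // (l.map LexPair.var).Nodup }

variable {ι : Type*} {D : ι → Type*}

/-- The list of variables occurring in a lex model. -/
def vars (π : LexModel ι D) : List ι := π.1.map LexPair.var

/-- The empty lex model. -/
def emptyModel : LexModel ι D := ⟨[], List.nodup_nil⟩

/-- Composition of lex models: `π` followed by the pairs of `π'` whose variable does
not occur in `π`. -/
def comp [DecidableEq ι] (π π' : LexModel ι D) : LexModel ι D :=
  ⟨π.1 ++ π'.1.filter (fun p => decide (p.var ∉ vars π)), by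
    have h1 : (π'.1.filter (fun p => decide (p.var ∉ vars π))).Sublist π'.1 :=
      List.filter_sublist
    rw [List.map_append, List.nodup_append]
    refine ⟨π.2, (h1.map LexPair.var).nodup π'.2, ?_⟩
    intro x hx y hy
    obtain ⟨p, hp, rfl⟩ := List.mem_map.mp hy
    have hd := List.of_mem_filter hp
    simp only [decide_eq_true_eq] at hd
    intro hxy
    subst hxy
    exact hd hx⟩

/-- `π'` extends `π`: `π' ≠ π` and the sequence `π'` begins with `π`. -/
def Extends (π' π : LexModel ι D) : Prop := π' ≠ π ∧ π.1 <+: π'.1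

/-- `π' ⊒ π`: `π'` extends or equals `π`. -/
def ExtendsEq (π' π : LexModel ι D) : Prop := π.1 <+: π'.1

/-- Lexicographic weak preference along a list of pairs. -/
def prefList : List (LexPair ι D) → Outcome ι D → Outcome ι D → Prop
  | [], _, _ => True
  | p :: rest, α, β =>
      (α p.var ≠ β p.var ∧ p.ord (α p.var) (β p.var)) ∨
      (α p.var = β p.var ∧ prefList rest α β)

/-- Lexicographic strict preference along a list of pairs. -/
def sprefList : List (LexPair ι D) → Outcome ι D → Outcome ι D → Prop
  | [], _, _ => False
  | p :: rest, α, β =>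
      (α p.var ≠ β p.var ∧ p.ord (α p.var) (β p.var)) ∨
      (α p.var = β p.var ∧ sprefList rest α β)

/-- `α ≽_π β`. -/
def pref (π : LexModel ι D) (α β : Outcome ι D) : Prop := prefList π.1 α β

/-- `α ≻_π β`. -/
def spref (π : LexModel ι D) (α β : Outcome ι D) : Prop := sprefList π.1 α β

/-- `α ≡_π β`: the outcomes agree on all variables of `π`. -/
def eqOn (π : LexModel ι D) (α β : Outcome ι D) : Prop := ∀ X ∈ vars π, α X = β X

section Language

variable {L : Type*} (sat : LexModel ι D → L → Prop)

/-- `π ⊨ Γ`. -/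
def satSet (π : LexModel ι D) (Γ : Set L) : Prop := ∀ φ ∈ Γ, sat π φ

/-- `Γ` is consistent: some lex model satisfies it. -/
def Consistent (Γ : Set L) : Prop := ∃ π, satSet sat π Γ

/-- `π ⊨* φ`: some `π' ⊒ π` satisfies `φ`. -/
def satStar (π : LexModel ι D) (φ : L) : Prop := ∃ π', ExtendsEq π' π ∧ sat π' φ

/-- `π ⊨* Γ`. -/
def satStarSet (π : LexModel ι D) (Γ : Set L) : Prop := ∀ φ ∈ Γ, satStar sat π φ

/-- `φ` is compositional. -/
def CompositionalStmt [DecidableEq ι] (φ : L) : Prop :=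
  ∀ π π', sat π φ → sat π' φ → sat (comp π π') φ

/-- `Γ` is compositional. -/
def Compositional [DecidableEq ι] (Γ : Set L) : Prop :=
  ∀ φ ∈ Γ, CompositionalStmt sat φ

/-- `φ` is strongly compositional. -/
def StronglyCompositionalStmt [DecidableEq ι] (φ : L) : Prop :=
  ∀ π π', satStar sat π φ → sat π' φ → sat (comp π π') φ

/-- `Γ` is strongly compositional. -/
def StronglyCompositional [DecidableEq ι] (Γ : Set L) : Prop :=
  ∀ φ ∈ Γ, StronglyCompositionalStmt sat φ

/-- `π` is a maximal model of `Γ`. -/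
def MaximalModel (π : LexModel ι D) (Γ : Set L) : Prop :=
  satSet sat π Γ ∧ ∀ π', Extends π' π → ¬ satSet sat π' Γ

/-- `π` is a maximal `⊨*`-model of `Γ`. -/
def MaximalStarModel (π : LexModel ι D) (Γ : Set L) : Prop :=
  satStarSet sat π Γ ∧ ∀ π', Extends π' π → ¬ satStarSet sat π' Γ

end Language

/-- `O_σ(𝒜)`: the optimal elements of `A` with respect to `σ`. -/
def opt (σ : LexModel ι D) (A : Set (Outcome ι D)) : Set (Outcome ι D) :=
  {α ∈ A | ∀ β ∈ A, pref σ α β}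

/-- Iterated optimisation `𝒜_{π₁,…,π_k}`. -/
def iterOpt : List (LexModel ι D) → Set (Outcome ι D) → Set (Outcome ι D)
  | [], A => A
  | σ :: rest, A => iterOpt rest (opt σ A)

end LexPref

namespace LexPref

/-- `φ` is decreasing: satisfaction is preserved when passing from an extension
back to the extended model. -/
def DecreasingStmt {ι : Type*} {D : ι → Type*} {L : Type*}
    (sat : LexModel ι D → L → Prop) (φ : L) : Prop :=
  ∀ π π' : LexModel ι D, Extends π' π → sat π' φ → sat π φ

section Decreasing

variable {ι : Type*} {D : ι → Type*} {L : Type*} {sat : LexModel ι D → L → Prop} {φ : L}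

theorem satStar_of_sat {π : LexModel ι D} (hπ : sat π φ) : satStar sat π φ :=
  ⟨π, List.prefix_rfl, hπ⟩

theorem DecreasingStmt.satStar_iff (h : DecreasingStmt sat φ) {π : LexModel ι D} :
    satStar sat π φ ↔ sat π φ := by
  refine ⟨fun ⟨π', hπ', hsat⟩ => ?_, satStar_of_sat⟩
  by_cases hne : π' = π
  · exact hne ▸ hsat
  · exact h π π' ⟨hne, hπ'⟩ hsat

end Decreasing

theorem decreasing_strongly_compositional_iff_general {ι : Type*} {D : ι → Type*} [DecidableEq ι] {L : Type*}
    (sat : LexModel ι D → L → Prop) (φ : L) (h : DecreasingStmt sat φ) :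
    StronglyCompositionalStmt sat φ ↔ CompositionalStmt sat φ := by
  simp only [StronglyCompositionalStmt, CompositionalStmt, h.satStar_iff]

/-- a decreasing statement is strongly compositional iff it is
compositional. -/
theorem decreasing_strongly_compositional_iff {ι : Type*} {D : ι → Type*} [DecidableEq ι]
    [Fintype ι] [∀ i, Fintype (D i)] {L : Type*}
    (sat : LexModel ι D → L → Prop) (φ : L) (h : DecreasingStmt sat φ) :
    StronglyCompositionalStmt sat φ ↔ CompositionalStmt sat φ :=
  decreasing_strongly_compositional_iff_general sat φ h

end LexPref
end

section
/- Let ℛ be a set of pairs of outcomes, and let φ^ℛ ∈ ℒ be a statement such that for all π ∈ 𝒢, π ⊨ φ^ℛ if and only if ≽_π ⊇ ℛ. Then φ^ℛ is strongly compositional, and for any π ∈ 𝒢, π ⊨* φ^ℛ if and only if π ⊨ φ^ℛ. -/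
/-!
Along a list of pairs, `α ≽ β` holds either strictly or because `α` and `β` tie on every
variable of the list. Hence `≽` along `l ++ m` implies `≽` along `l`, so a lex model whose
preference contains `ℛ` passes this on to its prefixes and `⊨*` collapses to `⊨`. For the
composition `π ∘ π'`, each pair of `ℛ` is either decided strictly by `π`, or tied on all variables
of `π`; in the latter case the pairs of `π'` dropped by the composition are tied as well, so they
do not affect the comparison along `π'`.
-/

namespace LexPref

section

variable {ι : Type*} {D : ι → Type*} {α β : Outcome ι D} {l m : List (LexPair ι D)}

lemma prefList_append_iff :
    prefList (l ++ m) α β ↔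
      sprefList l α β ∨ ((∀ p ∈ l, α p.var = β p.var) ∧ prefList m α β) := by
  induction l with
  | nil => simp [sprefList]
  | cons p rest ih =>
    change _ ∨ (_ ∧ prefList (rest ++ m) α β) ↔ _
    rw [ih, List.forall_mem_cons]
    constructor
    · rintro (h | ⟨he, hs | ⟨ha, hm⟩⟩)
      · exact Or.inl (Or.inl h)
      · exact Or.inl (Or.inr ⟨he, hs⟩)
      · exact Or.inr ⟨⟨he, ha⟩, hm⟩
    · rintro ((h | ⟨he, hs⟩) | ⟨⟨he, ha⟩, hm⟩)
      · exact Or.inl h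
      · exact Or.inr ⟨he, Or.inl hs⟩
      · exact Or.inr ⟨he, Or.inr ⟨ha, hm⟩⟩

lemma prefList_iff_sprefList_or_forall_eq :
    prefList l α β ↔ sprefList l α β ∨ ∀ p ∈ l, α p.var = β p.var := by
  simpa [prefList] using prefList_append_iff (m := [])

lemma prefList_of_prefList_append (h : prefList (l ++ m) α β) : prefList l α β :=
  prefList_iff_sprefList_or_forall_eq.mpr ((prefList_append_iff.mp h).imp_right And.left)

lemma prefList_filter {q : LexPair ι D → Bool}
    (hq : ∀ p ∈ m, q p = false → α p.var = β p.var) (h : prefList m α β) :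
    prefList (m.filter q) α β := by
  induction m with
  | nil => trivial
  | cons p rest ih =>
    rw [List.forall_mem_cons] at hq
    cases hqp : q p
    · rw [List.filter_cons_of_neg (by simp [hqp])]
      rcases h with h | ⟨-, hr⟩
      · exact absurd (hq.1 hqp) h.1
      · exact ih hq.2 hr
    · rw [List.filter_cons_of_pos hqp]
      rcases h with h | ⟨he, hr⟩
      · exact Or.inl h
      · exact Or.inr ⟨he, ih hq.2 hr⟩

lemma pref_of_extendsEq {π π' : LexModel ι D} (hext : ExtendsEq π' π) (h : pref π' α β) :
    pref π α β := by
  obtain ⟨t, ht⟩ := hext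
  exact prefList_of_prefList_append (m := t) (ht ▸ h)

lemma pref_comp [DecidableEq ι] {π π' : LexModel ι D} (h : pref π α β) (h' : pref π' α β) :
    pref (comp π π') α β := by
  refine prefList_append_iff.mpr ?_
  rcases prefList_iff_sprefList_or_forall_eq.mp h with hs | htie
  · exact Or.inl hs
  · refine Or.inr ⟨htie, prefList_filter (fun p _ hp => ?_) h'⟩
    simp only [decide_eq_false_iff_not, not_not, vars, List.mem_map] at hp
    obtain ⟨r, hr, hvar⟩ := hp
    exact hvar ▸ htie r hr

end

theorem phiR_strongly_compositional_general {ι : Type*} {D : ι → Type*} [DecidableEq ι]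
    {L : Type*}
    (sat : LexModel ι D → L → Prop)
    (R : Set (Outcome ι D × Outcome ι D)) (φ : L)
    (h : ∀ π, sat π φ ↔ ∀ p ∈ R, pref π p.1 p.2) :
    StronglyCompositionalStmt sat φ ∧ ∀ π, (satStar sat π φ ↔ sat π φ) := by
  have sat_of_satStar : ∀ π, satStar sat π φ → sat π φ := by
    rintro π ⟨π', hext, hπ'⟩
    rw [h] at hπ' ⊢
    exact fun p hp => pref_of_extendsEq hext (hπ' p hp)
  refine ⟨fun π π' hπ hπ' => ?_,
    fun π => ⟨sat_of_satStar π, fun hπ => ⟨π, List.prefix_refl _, hπ⟩⟩⟩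
  rw [h] at hπ' ⊢
  exact fun p hp => pref_comp ((h π).mp (sat_of_satStar π hπ) p hp) (hπ' p hp)

/-- a statement `φ^ℛ` holding iff `≽_π ⊇ ℛ` is strongly
compositional, and `π ⊨* φ^ℛ ↔ π ⊨ φ^ℛ`. -/
theorem phiR_strongly_compositional {ι : Type*} {D : ι → Type*} [DecidableEq ι]
    [Fintype ι] [∀ i, Fintype (D i)] {L : Type*}
    (sat : LexModel ι D → L → Prop)
    (R : Set (Outcome ι D × Outcome ι D)) (φ : L)
    (h : ∀ π, sat π φ ↔ ∀ p ∈ R, pref π p.1 p.2) :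
    StronglyCompositionalStmt sat φ ∧ ∀ π, (satStar sat π φ ↔ sat π φ) :=
  phiR_strongly_compositional_general sat R φ h

end LexPref
end
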